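/- arXiv:1412.1857 — 4 statements merged into one kernel-verified Lean document; each statement's English description precedes it below -/
import Mathlib

section
/- Let K ⊆ E be a regular cone with dual cone K* = {s ∈ E : ⟨s,x⟩ ≥ 0 for all x ∈ K}, and let B : E → E be a self-adjoint positive definite linear operator satisfying B(K) ⊆ K*. If u, v ∈ E satisfy u − v ∈ K and u + v ∈ K, then ⟨Bv, v⟩ ≤ ⟨Bu, u⟩, i.e. ‖v‖_B ≤ ‖u‖_B. -/
open Set Filter Topology RealInnerProductSpace

noncomputable section

/-- The dual cone of a set `K` in a real inner product space. -/
def dualConeSet {E : Type*} [NormedAddCommGroup E] [InnerProductSpace ℝ E] (K : Set E) :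
    Set E :=
  {s : E | ∀ x ∈ K, 0 ≤ ⟪s, x⟫}

/-- A regular cone: closed, convex, pointed, with nonempty interior. -/
structure IsRegularCone {E : Type*} [NormedAddCommGroup E] [InnerProductSpace ℝ E]
    (K : Set E) : Prop where
  isClosed : IsClosed K
  convex : Convex ℝ K
  smul_mem : ∀ ⦃x : E⦄, x ∈ K → ∀ ⦃t : ℝ⦄, 0 ≤ t → t • x ∈ K
  pointed : ∀ ⦃x : E⦄, x ∈ K → -x ∈ K → x = 0
  interior_nonempty : (interior K).Nonempty

/-- The Hessian of `f` at `x`, as a continuous linear map (the derivative of the gradient). -/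
def hess {E : Type*} [NormedAddCommGroup E] [InnerProductSpace ℝ E] [CompleteSpace E]
    (f : E → ℝ) (x : E) : E →L[ℝ] E :=
  fderiv ℝ (gradient f) x

/-- A ν-normal barrier for the cone `K`: C³, convex, with positive definite Hessians on
`int K`, self-concordant, and ν-logarithmically homogeneous. -/
structure IsNormalBarrier {E : Type*} [NormedAddCommGroup E] [InnerProductSpace ℝ E]
    [CompleteSpace E] (K : Set E) (F : E → ℝ) (ν : ℝ) : Prop where
  one_le_nu : 1 ≤ ν
  smooth : ContDiffOn ℝ 3 F (interior K)
  convexOn : ConvexOn ℝ (interior K) F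
  hess_posdef : ∀ x ∈ interior K, ∀ h : E, h ≠ 0 → 0 < ⟪hess F x h, h⟫
  selfConcordant : ∀ x ∈ interior K, ∀ h : E,
    |iteratedFDeriv ℝ 3 F x ![h, h, h]| ≤ 2 * ⟪hess F x h, h⟫ ^ ((3 : ℝ) / 2)
  logHom : ∀ x ∈ interior K, ∀ τ : ℝ, 0 < τ → F (τ • x) = F x - ν * Real.log τ

/-- Lemma `lm-B`. If `B(K) ⊆ K*` and `u − v ∈ K`, `u + v ∈ K`, then
`‖v‖_B ≤ ‖u‖_B`, i.e. `⟨Bv, v⟩ ≤ ⟨Bu, u⟩`. -/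
theorem norm_B_monotone {E : Type*} [NormedAddCommGroup E] [InnerProductSpace ℝ E]
    [FiniteDimensional ℝ E]
    (K : Set E) (hK : IsRegularCone K)
    (B : E →L[ℝ] E)
    (hBsa : ∀ a b : E, ⟪B a, b⟫ = ⟪a, B b⟫)
    (hBpd : ∀ h : E, h ≠ 0 → 0 < ⟪B h, h⟫)
    (hBK : ∀ x ∈ K, B x ∈ dualConeSet K)
    (u v : E) (huv : u - v ∈ K) (huv' : u + v ∈ K) :
    ⟪B v, v⟫ ≤ ⟪B u, u⟫ := by
  have h0 : 0 ≤ ⟪B (u - v), u + v⟫ := hBK _ huv _ huv'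
  have hsym : ⟪B u, v⟫ = ⟪B v, u⟫ := by
    rw [hBsa u v, real_inner_comm]
  simp only [map_sub, inner_sub_left, inner_add_right] at h0
  linarith
end
end

section
/- Let Q ⊆ H be a closed convex set with nonempty interior containing no straight line, let f be a ν-self-concordant barrier for Q with nondegenerate Hessian on int Q, let b ∈ H, f* = max{⟨b,u⟩ : u ∈ Q} attained at y_* ∈ Q, and let G : H → H be a self-adjoint positive definite operator. Assume the sharp-maximum condition: there is γ_d > 0 with f* − ⟨b,u⟩ ≥ γ_d ‖u − y_*‖_G for all u ∈ Q. Then for every y ∈ int Q, [∇²f(y)]⁻¹ ⪯ (4/γ_d²)·(f* − ⟨b,y⟩)²·G⁻¹ in the Loewner order. -/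
/-!
By self-concordance, `t ↦ ⟪∇²f(y + t d) d, d⟫^(-1/2)` is 1-Lipschitz, so the Hessian stays bounded
along any segment from `y` inside the Dikin ellipsoid `⟪∇²f(y) d, d⟫ < 1`; the barrier is then
bounded on that segment and cannot reach `∂Q`, so the ellipsoid lies in `int Q`.
If `y ± d ∈ Q`, the sharp-maximum inequality at both points and the triangle inequality for
`‖·‖_G` give `γ_d ‖d‖_G ≤ f* − ⟨b, y⟩`. Taking `⟪∇²f(y) d, d⟫ = 1/4` yields
`γ_d² G ⪯ 4 (f* − ⟨b, y⟩)² ∇²f(y)`, and the Loewner order reverses under inversion by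
Cauchy–Schwarz for `G`.
-/

open Set Filter Topology RealInnerProductSpace

noncomputable section

/-- A ν-self-concordant barrier for the closed convex set `Q`: C³, convex, with positive
definite Hessians on `int Q`, self-concordant, blowing up at the boundary of `Q`, and with
`⟨∇f(y), [∇²f(y)]⁻¹ ∇f(y)⟩ ≤ ν` (expressed via the vector `w` with `∇²f(y) w = ∇f(y)`). -/
structure IsSCBarrier {E : Type*} [NormedAddCommGroup E] [InnerProductSpace ℝ E]
    [CompleteSpace E] (Q : Set E) (f : E → ℝ) (ν : ℝ) : Prop where
  smooth : ContDiffOn ℝ 3 f (interior Q)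
  convexOn : ConvexOn ℝ (interior Q) f
  hess_posdef : ∀ y ∈ interior Q, ∀ h : E, h ≠ 0 → 0 < ⟪hess f y h, h⟫
  selfConcordant : ∀ y ∈ interior Q, ∀ h : E,
    |iteratedFDeriv ℝ 3 f y ![h, h, h]| ≤ 2 * ⟪hess f y h, h⟫ ^ ((3 : ℝ) / 2)
  tendsto_atTop : ∀ z ∈ frontier Q, Tendsto f (𝓝[interior Q] z) atTop
  grad_bound : ∀ y ∈ interior Q, ∀ w : E, hess f y w = gradient f y →
    ⟪gradient f y, w⟫ ≤ ν

theorem exists_first_exit {X : Type*} [TopologicalSpace X] {c : ℝ → X} (hc : Continuous c)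
    {U : Set X} (hU : IsOpen U) (h0 : c 0 ∈ U) (h1 : c 1 ∉ U) :
    ∃ T ∈ Ioc (0 : ℝ) 1, c T ∉ U ∧ ∀ t ∈ Ico 0 T, c t ∈ U := by
  set K := Icc (0 : ℝ) 1 ∩ c ⁻¹' Uᶜ
  have hK : IsClosed K := isClosed_Icc.inter (hU.isClosed_compl.preimage hc)
  have hKbdd : BddBelow K := ⟨0, fun t ht => ht.1.1⟩
  have hTK : sInf K ∈ K := hK.csInf_mem ⟨1, ⟨by simp, h1⟩⟩ hKbdd
  refine ⟨sInf K, ⟨hTK.1.1.lt_of_ne ?_, hTK.1.2⟩, hTK.2, fun t ht => ?_⟩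
  · intro hT
    exact hTK.2 (hT ▸ h0)
  · by_contra hout
    exact (csInf_le hKbdd ⟨⟨ht.1, ht.2.le.trans hTK.1.2⟩, hout⟩).not_gt ht.2

theorem abs_sub_le_mul_of_abs_deriv_le {u u' : ℝ → ℝ} {T C : ℝ}
    (hu : ∀ t ∈ Ico 0 T, HasDerivAt u (u' t) t) (hC : ∀ t ∈ Ico 0 T, |u' t| ≤ C)
    {t : ℝ} (ht : t ∈ Ico 0 T) : |u t - u 0| ≤ C * t := by
  have h0 : (0 : ℝ) ∈ Ico 0 T := ⟨le_rfl, ht.1.trans_lt ht.2⟩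
  simpa [abs_of_nonneg ht.1] using (convex_Ico 0 T).norm_image_sub_le_of_norm_hasDerivWithin_le
    (fun s hs => (hu s hs).hasDerivWithinAt) hC h0 ht

theorem le_of_abs_second_deriv_le {φ φ' φ'' : ℝ → ℝ} {T M : ℝ} (hT : T ≤ 1)
    (hφ : ∀ t ∈ Ico 0 T, HasDerivAt φ (φ' t) t) (hφ' : ∀ t ∈ Ico 0 T, HasDerivAt φ' (φ'' t) t)
    (hM : ∀ t ∈ Ico 0 T, |φ'' t| ≤ M) {t : ℝ} (ht : t ∈ Ico 0 T) :
    φ t ≤ φ 0 + (|φ' 0| + M) := by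
  have hM0 : 0 ≤ M := (abs_nonneg _).trans (hM t ht)
  have hslope : ∀ s ∈ Ico 0 T, |φ' s| ≤ |φ' 0| + M := fun s hs => by
    have hs1 : M * s ≤ M := mul_le_of_le_one_right hM0 (hs.2.le.trans hT)
    linarith [abs_sub_le_mul_of_abs_deriv_le hφ' hM hs, abs_sub_abs_le_abs_sub (φ' s) (φ' 0)]
  have ht1 : (|φ' 0| + M) * t ≤ |φ' 0| + M :=
    mul_le_of_le_one_right (by positivity) (ht.2.le.trans hT)
  linarith [le_abs_self (φ t - φ 0), abs_sub_le_mul_of_abs_deriv_le hφ hslope ht]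

theorem inv_sqrt_sub_le_inv_sqrt {q q' : ℝ → ℝ} {T : ℝ} (hq : ∀ t ∈ Ico 0 T, 0 < q t)
    (hq' : ∀ t ∈ Ico 0 T, HasDerivAt q (q' t) t)
    (hsc : ∀ t ∈ Ico 0 T, |q' t| ≤ 2 * q t ^ ((3 : ℝ) / 2)) {t : ℝ} (ht : t ∈ Ico 0 T) :
    (√(q 0))⁻¹ - t ≤ (√(q t))⁻¹ := by
  have hψ : ∀ s ∈ Ico 0 T, HasDerivAt (fun s => (√(q s))⁻¹)
      (-(q' s / (2 * √(q s))) / √(q s) ^ 2) s := fun s hs =>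
    ((hq' s hs).sqrt (hq s hs).ne').inv (Real.sqrt_pos.2 (hq s hs)).ne'
  have hψ' : ∀ s ∈ Ico 0 T, |-(q' s / (2 * √(q s))) / √(q s) ^ 2| ≤ 1 := fun s hs => by
    have hpos := hq s hs
    have h32 : q s ^ ((3 : ℝ) / 2) = q s * √(q s) := by
      rw [show (3 : ℝ) / 2 = 1 + 1 / 2 by norm_num, Real.rpow_add hpos, Real.rpow_one,
        Real.sqrt_eq_rpow]
    have hsqrt := Real.sqrt_pos.2 hpos
    rw [abs_div, abs_neg, abs_div, Real.sq_sqrt hpos.le,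
      abs_of_pos (by positivity : 0 < 2 * √(q s)), abs_of_pos hpos, div_div,
      div_le_one (by positivity)]
    linarith [hsc s hs]
  have := abs_sub_le_mul_of_abs_deriv_le hψ hψ' ht
  linarith [neg_abs_le ((√(q t))⁻¹ - (√(q 0))⁻¹)]

section LineDerivatives

variable {E F : Type*} [NormedAddCommGroup E] [NormedSpace ℝ E] [NormedAddCommGroup F]
  [NormedSpace ℝ F]

theorem hasDerivAt_comp_add_smul {g : E → F} {y d : E} {t : ℝ}
    (hg : DifferentiableAt ℝ g (y + t • d)) :
    HasDerivAt (fun s : ℝ => g (y + s • d)) (fderiv ℝ g (y + t • d) d) t :=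
  hg.hasFDerivAt.comp_hasDerivAt t (by simpa using ((hasDerivAt_id t).smul_const d).const_add y)

theorem iteratedFDeriv_three_apply_self (f : E → ℝ) (x d : E) :
    iteratedFDeriv ℝ 3 f x ![d, d, d] = fderiv ℝ (fderiv ℝ (fderiv ℝ f)) x d d d := by
  rw [show (![d, d, d] : Fin 3 → E) = fun _ => d by ext i; fin_cases i <;> rfl,
    iteratedFDeriv_succ_apply_right, iteratedFDeriv_succ_apply_right, iteratedFDeriv_one_apply]
  rfl

end LineDerivatives

section Hessian

variable {E : Type*} [NormedAddCommGroup E] [InnerProductSpace ℝ E] [CompleteSpace E]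

theorem inner_hess_apply (f : E → ℝ) (x h k : E) :
    ⟪hess f x h, k⟫ = fderiv ℝ (fderiv ℝ f) x h k := by
  let e : StrongDual ℝ E ≃ₗᵢ[ℝ] E := (InnerProductSpace.toDual ℝ E).symm
  have hcomp : hess f x = (e : StrongDual ℝ E →L[ℝ] E).comp (fderiv ℝ (fderiv ℝ f) x) := by
    rw [hess, show gradient f = e ∘ fderiv ℝ f from rfl, LinearIsometryEquiv.comp_fderiv]
  rw [hcomp]
  exact InnerProductSpace.toDual_symm_apply

variable {f : E → ℝ} {y d : E} {t : ℝ}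

theorem hasDerivAt_fderiv_comp_add_smul (hf : ContDiffAt ℝ 3 f (y + t • d)) :
    HasDerivAt (fun s : ℝ => fderiv ℝ f (y + s • d) d) ⟪hess f (y + t • d) d, d⟫ t := by
  have hD1 : DifferentiableAt ℝ (fderiv ℝ f) (y + t • d) :=
    (hf.fderiv_right (m := 2) (by norm_num)).differentiableAt (by norm_num)
  rw [inner_hess_apply]
  simpa using (hasDerivAt_comp_add_smul hD1).clm_apply (hasDerivAt_const t d)

theorem hasDerivAt_inner_hess_comp_add_smul (hf : ContDiffAt ℝ 3 f (y + t • d)) :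
    HasDerivAt (fun s : ℝ => ⟪hess f (y + s • d) d, d⟫)
      (iteratedFDeriv ℝ 3 f (y + t • d) ![d, d, d]) t := by
  have hD2 : DifferentiableAt ℝ (fderiv ℝ (fderiv ℝ f)) (y + t • d) :=
    ((hf.fderiv_right (m := 2) (by norm_num)).fderiv_right (m := 1) (by norm_num)).differentiableAt
      (by norm_num)
  have h := hasDerivAt_comp_add_smul (F := E →L[ℝ] E →L[ℝ] ℝ) hD2
  simp only [inner_hess_apply, iteratedFDeriv_three_apply_self]
  simpa using (h.clm_apply (hasDerivAt_const t d)).clm_apply (hasDerivAt_const t d)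

end Hessian

namespace IsSCBarrier

variable {E : Type*} [NormedAddCommGroup E] [InnerProductSpace ℝ E] [CompleteSpace E]
  {Q : Set E} {f : E → ℝ} {ν : ℝ}

theorem contDiffAt (hf : IsSCBarrier Q f ν) {x : E} (hx : x ∈ interior Q) :
    ContDiffAt ℝ 3 f x :=
  hf.smooth.contDiffAt (isOpen_interior.mem_nhds hx)

theorem inner_hess_le_of_segment (hf : IsSCBarrier Q f ν) {y d : E} (hd0 : d ≠ 0)
    (hd : ⟪hess f y d, d⟫ < 1) {T : ℝ} (hT : T ≤ 1)
    (hin : ∀ t ∈ Ico 0 T, y + t • d ∈ interior Q) {t : ℝ} (ht : t ∈ Ico 0 T) :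
    ⟪hess f (y + t • d) d, d⟫ ≤ ((√⟪hess f y d, d⟫)⁻¹ - 1)⁻¹ ^ 2 := by
  have hpos : ∀ s ∈ Ico 0 T, 0 < ⟪hess f (y + s • d) d, d⟫ := fun s hs =>
    hf.hess_posdef _ (hin s hs) d hd0
  have hψ := inv_sqrt_sub_le_inv_sqrt hpos
    (fun s hs => hasDerivAt_inner_hess_comp_add_smul (hf.contDiffAt (hin s hs)))
    (fun s hs => hf.selfConcordant _ (hin s hs) d) ht
  have hy := hpos 0 ⟨le_rfl, ht.1.trans_lt ht.2⟩
  simp only [zero_smul, add_zero] at hψ hy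
  have hgap : 0 < (√⟪hess f y d, d⟫)⁻¹ - 1 := by
    rw [sub_pos, one_lt_inv₀ (Real.sqrt_pos.2 hy)]
    exact (Real.sqrt_lt' one_pos).2 (by simpa using hd)
  calc ⟪hess f (y + t • d) d, d⟫ = (√⟪hess f (y + t • d) d, d⟫) ^ 2 :=
        (Real.sq_sqrt (hpos t ht).le).symm
    _ ≤ ((√⟪hess f y d, d⟫)⁻¹ - 1)⁻¹ ^ 2 := by
        gcongr
        rw [le_inv_comm₀ (Real.sqrt_pos.2 (hpos t ht)) hgap]
        linarith [ht.2.le.trans hT]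

theorem add_mem_interior (hf : IsSCBarrier Q f ν) {y d : E} (hy : y ∈ interior Q)
    (hd : ⟪hess f y d, d⟫ < 1) : y + d ∈ interior Q := by
  rcases eq_or_ne d 0 with rfl | hd0
  · simpa using hy
  by_contra hout
  obtain ⟨T, ⟨hT0, hT1⟩, hTout, hin⟩ := exists_first_exit (c := fun t : ℝ => y + t • d)
    (by fun_prop) isOpen_interior (by simpa using hy) (by simpa using hout)
  set M := ((√⟪hess f y d, d⟫)⁻¹ - 1)⁻¹ ^ 2
  have hbdd : ∀ t ∈ Ico 0 T, f (y + t • d) ≤ f y + (|fderiv ℝ f y d| + M) := fun t ht => by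
    have h := le_of_abs_second_deriv_le (φ := fun s : ℝ => f (y + s • d)) hT1
      (fun s hs => hasDerivAt_comp_add_smul ((hf.contDiffAt (hin s hs)).differentiableAt
        (by norm_num)))
      (fun s hs => hasDerivAt_fderiv_comp_add_smul (hf.contDiffAt (hin s hs)))
      (fun s hs => (abs_of_pos (hf.hess_posdef _ (hin s hs) d hd0)).trans_le
        (hf.inner_hess_le_of_segment hd0 hd hT1 hin hs)) ht
    simpa only [zero_smul, add_zero] using h
  have hleft : (𝓝[Ico 0 T] T).NeBot := by
    rw [← mem_closure_iff_nhdsWithin_neBot, closure_Ico hT0.ne]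
    exact right_mem_Icc.2 hT0.le
  have hcont : Tendsto (fun t : ℝ => y + t • d) (𝓝[Ico 0 T] T) (𝓝 (y + T • d)) :=
    (by fun_prop : Continuous fun t : ℝ => y + t • d).continuousWithinAt
  have hinside : ∀ᶠ t in 𝓝[Ico 0 T] T, y + t • d ∈ interior Q :=
    eventually_nhdsWithin_of_forall hin
  have hfrontier : y + T • d ∈ frontier Q :=
    ⟨closure_mono interior_subset (mem_closure_of_tendsto hcont hinside), hTout⟩
  have hline := tendsto_nhdsWithin_iff.2 ⟨hcont, hinside⟩
  obtain ⟨t, hlarge, ht⟩ := ((((hf.tendsto_atTop _ hfrontier).comp hline).eventually_gt_atTop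
    (f y + (|fderiv ℝ f y d| + M))).and self_mem_nhdsWithin).exists
  exact (hbdd t ht).not_gt hlarge

end IsSCBarrier

theorem inner_map_self_le_of_level_set {E : Type*} [NormedAddCommGroup E] [InnerProductSpace ℝ E]
    {A G : E →L[ℝ] E} {r K : ℝ} (hr : 0 < r) (hA : ∀ x ≠ 0, 0 < ⟪A x, x⟫)
    (h : ∀ d, ⟪A d, d⟫ = r → ⟪G d, d⟫ ≤ K) (x : E) :
    r * ⟪G x, x⟫ ≤ K * ⟪A x, x⟫ := by
  rcases eq_or_ne x 0 with rfl | hx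
  · simp
  have ha := hA x hx
  have hquad : ∀ (B : E →L[ℝ] E) (t : ℝ), ⟪B (t • x), t • x⟫ = t ^ 2 * ⟪B x, x⟫ := fun B t => by
    rw [map_smul, real_inner_smul_left, real_inner_smul_right]; ring
  have hscale : (√(r / ⟪A x, x⟫)) ^ 2 = r / ⟪A x, x⟫ := Real.sq_sqrt (by positivity)
  have hscaled := h _ (by rw [hquad, hscale, div_mul_cancel₀ _ ha.ne'])
  rwa [hquad, hscale, div_mul_eq_mul_div, div_le_iff₀ ha] at hscaled

namespace ContinuousLinearMap.IsPositive

variable {E : Type*} [NormedAddCommGroup E] [InnerProductSpace ℝ E] {G : E →L[ℝ] E}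

theorem inner_map_sq_le (hG : G.IsPositive) (x z : E) :
    ⟪G x, z⟫ ^ 2 ≤ ⟪G x, x⟫ * ⟪G z, z⟫ :=
  LinearMap.BilinForm.apply_sq_le_of_symm ((innerₗ E).comp (G : E →ₗ[ℝ] E)) hG.inner_nonneg_left
    ⟨fun x z => by simp [hG.inner_left_eq_inner_right x z, real_inner_comm]⟩ x z

theorem sqrt_inner_map_add_le (hG : G.IsPositive) (x z : E) :
    √⟪G (x + z), x + z⟫ ≤ √⟪G x, x⟫ + √⟪G z, z⟫ := by
  have hcross : ⟪G x, z⟫ ≤ √⟪G x, x⟫ * √⟪G z, z⟫ := by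
    rw [← Real.sqrt_mul (hG.inner_nonneg_left x)]
    exact Real.le_sqrt_of_sq_le (hG.inner_map_sq_le x z)
  have hexpand : ⟪G (x + z), x + z⟫ = ⟪G x, x⟫ + 2 * ⟪G x, z⟫ + ⟪G z, z⟫ := by
    rw [map_add, inner_add_left, inner_add_right, inner_add_right,
      hG.inner_left_eq_inner_right z x, real_inner_comm (G x) z]
    ring
  refine Real.sqrt_le_iff.2 ⟨by positivity, ?_⟩
  rw [hexpand, add_sq, Real.sq_sqrt (hG.inner_nonneg_left x),
    Real.sq_sqrt (hG.inner_nonneg_left z)]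
  linarith

def seminorm (hG : G.IsPositive) : Seminorm ℝ E :=
  Seminorm.of (fun x => √⟪G x, x⟫) hG.sqrt_inner_map_add_le fun a x => by
    rw [map_smul, real_inner_smul_left, real_inner_smul_right, ← mul_assoc, ← sq,
      Real.sqrt_mul (sq_nonneg a), Real.sqrt_sq_eq_abs, Real.norm_eq_abs]

theorem seminorm_apply (hG : G.IsPositive) (x : E) : hG.seminorm x = √⟪G x, x⟫ := rfl

theorem sq_mul_inner_map_le_of_sharp {S : Set E} (hG : G.IsPositive) {b ystar y d : E}
    {fstar γ : ℝ} (hγ : 0 ≤ γ)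
    (hsharp : ∀ u ∈ S, γ * √⟪G (u - ystar), u - ystar⟫ ≤ fstar - ⟪b, u⟫)
    (hplus : y + d ∈ S) (hminus : y - d ∈ S) :
    γ ^ 2 * ⟪G d, d⟫ ≤ (fstar - ⟪b, y⟫) ^ 2 := by
  have hup := hsharp _ hplus
  have hdown := hsharp _ hminus
  rw [← hG.seminorm_apply, inner_add_right] at hup
  rw [← hG.seminorm_apply, inner_sub_right] at hdown
  have htri : 2 * hG.seminorm d ≤ hG.seminorm (y + d - ystar) + hG.seminorm (y - d - ystar) :=
    calc 2 * hG.seminorm d = hG.seminorm ((y + d - ystar) - (y - d - ystar)) := by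
          rw [← Real.norm_two, ← map_smul_eq_mul, two_smul]; congr 1; abel
      _ ≤ _ := map_sub_le_add _ _ _
  have hbound : γ * hG.seminorm d ≤ fstar - ⟪b, y⟫ := by
    nlinarith [mul_le_mul_of_nonneg_left htri hγ]
  calc γ ^ 2 * ⟪G d, d⟫ = (γ * hG.seminorm d) ^ 2 := by
        rw [mul_pow, hG.seminorm_apply, Real.sq_sqrt (hG.inner_nonneg_left d)]
    _ ≤ (fstar - ⟪b, y⟫) ^ 2 := pow_le_pow_left₀ (by positivity) hbound 2

theorem inner_inverse_le_of_inner_le (hG : G.IsPositive) {A W Ginv : E →L[ℝ] E}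
    (hGinv : ∀ v, G (Ginv v) = v) (hW : ∀ v, A (W v) = v) {c : ℝ} (hc : 0 ≤ c)
    (hle : ∀ x, ⟪G x, x⟫ ≤ c * ⟪A x, x⟫) (h : E) :
    ⟪W h, h⟫ ≤ c * ⟪Ginv h, h⟫ := by
  set w := W h
  set v := Ginv h
  have hGv : ⟪G v, v⟫ = ⟪v, h⟫ := by rw [hGinv, real_inner_comm]
  have hv : 0 ≤ ⟪v, h⟫ := hGv ▸ hG.inner_nonneg_left v
  have hcs : ⟪w, h⟫ * ⟪w, h⟫ ≤ c * ⟪v, h⟫ * ⟪w, h⟫ :=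
    calc ⟪w, h⟫ * ⟪w, h⟫ = ⟪G w, v⟫ ^ 2 := by
          rw [hG.inner_left_eq_inner_right, hGinv, sq]
      _ ≤ ⟪G w, w⟫ * ⟪G v, v⟫ := hG.inner_map_sq_le w v
      _ ≤ c * ⟪A w, w⟫ * ⟪G v, v⟫ := mul_le_mul_of_nonneg_right (hle w) (hG.inner_nonneg_left v)
      _ = c * ⟪v, h⟫ * ⟪w, h⟫ := by rw [hW, hGv, real_inner_comm]; ring
  rcases le_or_gt ⟪w, h⟫ 0 with hwh | hwh
  · exact hwh.trans (by positivity)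
  · exact le_of_mul_le_mul_right hcs hwh

end ContinuousLinearMap.IsPositive

theorem inverse_hessian_bound_general
    {H' : Type*} [NormedAddCommGroup H'] [InnerProductSpace ℝ H'] [FiniteDimensional ℝ H']
    (Q : Set H')
    (f : H' → ℝ) (ν : ℝ) (hf : IsSCBarrier Q f ν)
    (b : H') (fstar : ℝ) (ystar : H')
    (G : H' →L[ℝ] H') (hGsa : ∀ a b' : H', ⟪G a, b'⟫ = ⟪a, G b'⟫)
    (hGpd : ∀ h : H', h ≠ 0 → 0 < ⟪G h, h⟫)
    (Ginv : H' →L[ℝ] H') (hGinv : ∀ v : H', G (Ginv v) = v ∧ Ginv (G v) = v)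
    (γd : ℝ) (hγd : 0 < γd)
    (hsharp : ∀ u ∈ Q, γd * Real.sqrt ⟪G (u - ystar), u - ystar⟫ ≤ fstar - ⟪b, u⟫)
    (y : H') (hy : y ∈ interior Q)
    (W : H' →L[ℝ] H')
    (hW : ∀ v : H', hess f y (W v) = v ∧ W (hess f y v) = v) :
    ∀ h : H', ⟪W h, h⟫ ≤ 4 / γd ^ 2 * (fstar - ⟪b, y⟫) ^ 2 * ⟪Ginv h, h⟫ := by
  have hG : G.IsPositive := G.isPositive_iff.2 ⟨hGsa, fun x => by
    rcases eq_or_ne x 0 with rfl | hx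
    · simp
    · exact (hGpd x hx).le⟩
  have hdikin : ∀ d, ⟪hess f y d, d⟫ = 1 / 4 → y + d ∈ Q := fun d hd =>
    interior_subset (hf.add_mem_interior hy (by rw [hd]; norm_num))
  have hsphere : ∀ d, ⟪hess f y d, d⟫ = 1 / 4 → ⟪G d, d⟫ ≤ ((fstar - ⟪b, y⟫) / γd) ^ 2 :=
    fun d hd => by
      have := hG.sq_mul_inner_map_le_of_sharp hγd.le hsharp (hdikin d hd)
        (sub_eq_add_neg y d ▸ hdikin (-d) (by simpa using hd))
      rw [div_pow, le_div_iff₀ (by positivity)]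
      linarith
  refine hG.inner_inverse_le_of_inner_le (fun v => (hGinv v).1) (fun v => (hW v).1) (by positivity)
    fun x => ?_
  have := inner_map_self_le_of_level_set (by norm_num) (hf.hess_posdef y hy) hsphere x
  calc ⟪G x, x⟫ = 4 * (1 / 4 * ⟪G x, x⟫) := by ring
    _ ≤ 4 * (((fstar - ⟪b, y⟫) / γd) ^ 2 * ⟪hess f y x, x⟫) := by gcongr
    _ = 4 / γd ^ 2 * (fstar - ⟪b, y⟫) ^ 2 * ⟪hess f y x, x⟫ := by ring

/-- Lemma `lm-Hess`. Under the sharp-maximum assumption,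
`[∇²f(y)]⁻¹ ⪯ (4/γ_d²) (f* − ⟨b,y⟩)² G⁻¹`. -/
theorem inverse_hessian_bound
    {H' : Type*} [NormedAddCommGroup H'] [InnerProductSpace ℝ H'] [FiniteDimensional ℝ H']
    (Q : Set H') (hQclosed : IsClosed Q) (hQconvex : Convex ℝ Q)
    (hQint : (interior Q).Nonempty)
    (hNoLine : ∀ y d : H', d ≠ 0 → ¬ ∀ t : ℝ, y + t • d ∈ Q)
    (f : H' → ℝ) (ν : ℝ) (hν : 0 < ν) (hf : IsSCBarrier Q f ν)
    (b : H') (fstar : ℝ) (ystar : H') (hystarQ : ystar ∈ Q)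
    (hmax : ∀ u ∈ Q, ⟪b, u⟫ ≤ fstar) (hatt : ⟪b, ystar⟫ = fstar)
    (G : H' →L[ℝ] H') (hGsa : ∀ a b' : H', ⟪G a, b'⟫ = ⟪a, G b'⟫)
    (hGpd : ∀ h : H', h ≠ 0 → 0 < ⟪G h, h⟫)
    (Ginv : H' →L[ℝ] H') (hGinv : ∀ v : H', G (Ginv v) = v ∧ Ginv (G v) = v)
    (γd : ℝ) (hγd : 0 < γd)
    (hsharp : ∀ u ∈ Q, γd * Real.sqrt ⟪G (u - ystar), u - ystar⟫ ≤ fstar - ⟪b, u⟫)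
    (y : H') (hy : y ∈ interior Q)
    (W : H' →L[ℝ] H')
    (hW : ∀ v : H', hess f y (W v) = v ∧ W (hess f y v) = v) :
    ∀ h : H', ⟪W h, h⟫ ≤ 4 / γd ^ 2 * (fstar - ⟪b, y⟫) ^ 2 * ⟪Ginv h, h⟫ :=
  inverse_hessian_bound_general Q f ν hf b fstar ystar G hGsa hGpd Ginv hGinv γd hγd hsharp y hy W
    hW
end
end

section
/- Let K ⊆ E be a regular cone with dual cone K*, and let F be a ν-normal barrier for K with negative curvature (for every x ∈ int K and h ∈ K, D³F(x)[h] is negative semidefinite). Then for every x ∈ int K and every h ∈ K: (i) ∇²F(x)h ∈ K*, and (ii) ∇F(x+h) − ∇F(x) ∈ K*. -/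
/-!
Fix `x ∈ int K`, `y ∈ K` and first `h ∈ int K`, and follow the ray `x + t h`, `t ≥ 0`, which
stays in `int K`. The function `ψ t = D²F(x + t h)[y, h]` has derivative `D³F(x + t h)[y, h, h] ≤ 0`
by negative curvature, so it is nonincreasing, and it is the derivative of `φ t = DF(x + t h)[y]`.
Logarithmic homogeneity makes `DF` homogeneous of degree `-1`, so
`φ t = t⁻¹ DF(t⁻¹ x + h)[y] → 0`. A function with nonincreasing derivative that converges at
infinity has `ψ 0 ≥ 0`, since otherwise `φ t ≤ φ 0 + t ψ 0 → -∞`; hence `D²F(x)[y, h] ≥ 0`.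
This extends to `h ∈ K` because `K` is the closure of its interior, giving (i); and then `φ` is
nondecreasing along the ray for every `h ∈ K`, giving (ii).
-/

open Set Filter Topology RealInnerProductSpace

noncomputable section

namespace IsRegularCone

variable {E : Type*} [NormedAddCommGroup E] [InnerProductSpace ℝ E] {K : Set E}

theorem add_mem (hK : IsRegularCone K) {a b : E} (ha : a ∈ K) (hb : b ∈ K) : a + b ∈ K := by
  have hmid : (1 / 2 : ℝ) • a + (1 / 2 : ℝ) • b ∈ K :=
    hK.convex ha hb (by norm_num) (by norm_num) (by norm_num)
  convert hK.smul_mem hmid zero_le_two using 1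
  rw [smul_add, smul_smul, smul_smul]
  norm_num

theorem add_mem_interior (hK : IsRegularCone K) {x h : E} (hx : x ∈ interior K) (hh : h ∈ K) :
    x + h ∈ interior K := by
  refine interior_maximal ?_ ((Homeomorph.addRight h).isOpenMap _ isOpen_interior) ⟨x, hx, rfl⟩
  rintro _ ⟨z, hz, rfl⟩
  exact hK.add_mem (interior_subset hz) hh

theorem add_smul_mem_interior (hK : IsRegularCone K) {x h : E} {t : ℝ} (hx : x ∈ interior K)
    (hh : h ∈ K) (ht : 0 ≤ t) : x + t • h ∈ interior K :=
  hK.add_mem_interior hx (hK.smul_mem hh ht)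

theorem closure_interior (hK : IsRegularCone K) : closure (interior K) = K := by
  rw [hK.convex.closure_interior_eq_closure_of_nonempty_interior hK.interior_nonempty,
    hK.isClosed.closure_eq]

end IsRegularCone

theorem nonneg_of_tendsto_of_hasDerivAt_of_antitoneOn {φ ψ : ℝ → ℝ} {L : ℝ}
    (hφ : ∀ t ∈ Ici (0 : ℝ), HasDerivAt φ (ψ t) t) (hψ : AntitoneOn ψ (Ici 0))
    (hlim : Tendsto φ atTop (𝓝 L)) : 0 ≤ ψ 0 := by
  by_contra! hneg
  have hle : ∀ t ∈ Ici (0 : ℝ), φ t ≤ ψ 0 * t + φ 0 := fun t ht => by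
    have := (convex_Ici (0 : ℝ)).image_sub_le_mul_sub_of_deriv_le
      (fun s hs => (hφ s hs).continuousAt.continuousWithinAt)
      (fun s hs => (hφ s (interior_subset hs)).differentiableAt.differentiableWithinAt)
      (fun s hs => by
        rw [(hφ s (interior_subset hs)).deriv]
        exact hψ self_mem_Ici (interior_subset hs) (interior_subset hs))
      0 self_mem_Ici t ht ht
    linarith
  have hbot : Tendsto (fun t => ψ 0 * t + φ 0) atTop atBot :=
    tendsto_atBot_add_const_right _ _ (tendsto_id.const_mul_atTop_of_neg hneg)
  exact not_tendsto_nhds_of_tendsto_atBot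
    (tendsto_atBot_mono' _ ((eventually_ge_atTop 0).mono hle) hbot) L hlim

section Calculus

variable {E G : Type*} [NormedAddCommGroup E] [NormedSpace ℝ E] [NormedAddCommGroup G]
  [NormedSpace ℝ G]

theorem HasFDerivAt.comp_line {g : E → G} {g' : E →L[ℝ] G} {x h : E} {t : ℝ}
    (hg : HasFDerivAt g g' (x + t • h)) : HasDerivAt (fun s : ℝ => g (x + s • h)) (g' h) t := by
  simpa [Function.comp_def] using
    hg.comp_hasDerivAt t (((hasDerivAt_id t).smul_const h).const_add x)

theorem fderiv_eq_smul_fderiv_smul {F : E → G} {U : Set E} {z : E} {τ : ℝ} {c : G}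
    (hU : IsOpen U) (hz : z ∈ U) (hF : ∀ w ∈ U, F (τ • w) = F w - c) :
    fderiv ℝ F z = τ • fderiv ℝ F (τ • z) := by
  rw [← fderiv_comp_smul, ← fderiv_sub_const c]
  exact EventuallyEq.fderiv_eq (eventually_of_mem (hU.mem_nhds hz) fun w hw => (hF w hw).symm)

theorem tendsto_fderiv_line_atTop_zero {F : E → G} {U : Set E} {x h : E} (hU : IsOpen U)
    (hh : h ∈ U) (hcont : ContinuousAt (fderiv ℝ F) h)
    (hhom : ∀ w ∈ U, ∀ τ : ℝ, 0 < τ → fderiv ℝ F w = τ • fderiv ℝ F (τ • w)) :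
    Tendsto (fun t : ℝ => fderiv ℝ F (x + t • h)) atTop (𝓝 0) := by
  have hpath : Tendsto (fun t : ℝ => t⁻¹ • x + h) atTop (𝓝 h) := by
    simpa using ((tendsto_inv_atTop_zero (𝕜 := ℝ)).smul_const x).add_const h
  have hlim := (tendsto_inv_atTop_zero (𝕜 := ℝ)).smul (hcont.tendsto.comp hpath)
  rw [zero_smul] at hlim
  refine hlim.congr' ?_
  filter_upwards [hpath.eventually (hU.mem_nhds hh), eventually_gt_atTop 0] with t hU ht
  rw [Function.comp_apply, hhom _ hU t ht, smul_smul, inv_mul_cancel₀ ht.ne', one_smul,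
    smul_add, smul_smul, mul_inv_cancel₀ ht.ne', one_smul]

theorem iteratedFDeriv_three_apply (F : E → G) (z a b c : E) :
    iteratedFDeriv ℝ 3 F z ![a, b, c] = fderiv ℝ (fderiv ℝ (fderiv ℝ F)) z a b c := by
  rw [iteratedFDeriv_succ_apply_right]
  have hinit : Fin.init ![a, b, c] = ![a, b] := by
    ext i
    fin_cases i <;> rfl
  rw [hinit, iteratedFDeriv_two_apply]
  rfl

end Calculus

theorem inner_hess_apply_s18 {E : Type*} [NormedAddCommGroup E] [InnerProductSpace ℝ E]
    [CompleteSpace E] (F : E → ℝ) (x v w : E) :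
    ⟪hess F x v, w⟫ = fderiv ℝ (fderiv ℝ F) x v w := by
  have : gradient F = (InnerProductSpace.toDual ℝ E).symm ∘ fderiv ℝ F := rfl
  rw [hess, this, LinearIsometryEquiv.comp_fderiv]
  exact InnerProductSpace.toDual_symm_apply

def HasNegativeCurvature {E : Type*} [NormedAddCommGroup E] [NormedSpace ℝ E] (K : Set E)
    (F : E → ℝ) : Prop :=
  ∀ x ∈ interior K, ∀ h ∈ K, ∀ u : E, iteratedFDeriv ℝ 3 F x ![h, u, u] ≤ 0

namespace IsNormalBarrier

variable {E : Type*} [NormedAddCommGroup E] [InnerProductSpace ℝ E] [CompleteSpace E]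
  {K : Set E} {F : E → ℝ} {ν : ℝ} {x h y : E}

theorem contDiffAt (hF : IsNormalBarrier K F ν) (hx : x ∈ interior K) : ContDiffAt ℝ 3 F x :=
  hF.smooth.contDiffAt (isOpen_interior.mem_nhds hx)

theorem fderiv_fderiv_comm (hF : IsNormalBarrier K F ν) (hx : x ∈ interior K) (a b : E) :
    fderiv ℝ (fderiv ℝ F) x a b = fderiv ℝ (fderiv ℝ F) x b a :=
  (hF.contDiffAt hx).isSymmSndFDerivAt
    (by simp only [minSmoothness_of_isRCLikeNormedField]; norm_num) a b

theorem hasDerivAt_fderiv_line (hF : IsNormalBarrier K F ν) {t : ℝ}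
    (hz : x + t • h ∈ interior K) :
    HasDerivAt (fun s : ℝ => fderiv ℝ F (x + s • h) y)
      (fderiv ℝ (fderiv ℝ F) (x + t • h) y h) t := by
  have hD : HasFDerivAt (fderiv ℝ F) (fderiv ℝ (fderiv ℝ F) (x + t • h)) (x + t • h) :=
    (((hF.contDiffAt hz).fderiv_right (m := 2) (by norm_num)).differentiableAt
      (by norm_num)).hasFDerivAt
  rw [hF.fderiv_fderiv_comm hz]
  exact (ContinuousLinearMap.apply ℝ ℝ y).hasFDerivAt.comp_hasDerivAt t
    (hD.comp_line (g := fderiv ℝ F))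

theorem hasDerivAt_fderiv_fderiv_line (hF : IsNormalBarrier K F ν) {t : ℝ}
    (hz : x + t • h ∈ interior K) :
    HasDerivAt (fun s : ℝ => fderiv ℝ (fderiv ℝ F) (x + s • h) y h)
      (iteratedFDeriv ℝ 3 F (x + t • h) ![y, h, h]) t := by
  have hC2 : ContDiffAt ℝ 2 (fderiv ℝ F) (x + t • h) :=
    (hF.contDiffAt hz).fderiv_right (by norm_num)
  have hD : HasFDerivAt (fderiv ℝ (fderiv ℝ F)) (fderiv ℝ (fderiv ℝ (fderiv ℝ F)) (x + t • h))
      (x + t • h) :=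
    ((hC2.fderiv_right (m := 1) (by norm_num)).differentiableAt one_ne_zero).hasFDerivAt
  rw [iteratedFDeriv_three_apply, hC2.isSymmSndFDerivAt (by simp) y h]
  exact ((ContinuousLinearMap.apply ℝ ℝ h).comp
    (ContinuousLinearMap.apply ℝ (E →L[ℝ] ℝ) y)).hasFDerivAt.comp_hasDerivAt t
    (hD.comp_line (g := fderiv ℝ (fderiv ℝ F)))

theorem fderiv_fderiv_nonneg_of_mem_interior (hF : IsNormalBarrier K F ν)
    (hK : IsRegularCone K) (hNC : HasNegativeCurvature K F) (hx : x ∈ interior K)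
    (hh : h ∈ interior K) (hy : y ∈ K) : 0 ≤ fderiv ℝ (fderiv ℝ F) x y h := by
  have hray : ∀ t ∈ Ici (0 : ℝ), x + t • h ∈ interior K := fun t ht =>
    hK.add_smul_mem_interior hx (interior_subset hh) ht
  have hanti : AntitoneOn (fun t : ℝ => fderiv ℝ (fderiv ℝ F) (x + t • h) y h) (Ici 0) :=
    antitoneOn_of_hasDerivWithinAt_nonpos (convex_Ici 0)
      (fun t ht => (hF.hasDerivAt_fderiv_fderiv_line (hray t ht)).continuousAt.continuousWithinAt)
      (fun t ht =>
        (hF.hasDerivAt_fderiv_fderiv_line (hray t (interior_subset ht))).hasDerivWithinAt)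
      (fun t ht => hNC _ (hray t (interior_subset ht)) y hy h)
  have hhom : ∀ w ∈ interior K, ∀ τ : ℝ, 0 < τ → fderiv ℝ F w = τ • fderiv ℝ F (τ • w) :=
    fun w hw τ hτ => fderiv_eq_smul_fderiv_smul isOpen_interior hw fun v hv => hF.logHom v hv τ hτ
  have hlim : Tendsto (fun t : ℝ => fderiv ℝ F (x + t • h) y) atTop (𝓝 0) := by
    have hcont : ContinuousAt (fderiv ℝ F) h :=
      (hF.contDiffAt hh).continuousAt_fderiv (by norm_num)
    exact ((ContinuousLinearMap.apply ℝ ℝ y).continuous.tendsto 0).comp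
      (tendsto_fderiv_line_atTop_zero (x := x) isOpen_interior hh hcont hhom)
  simpa using nonneg_of_tendsto_of_hasDerivAt_of_antitoneOn
    (fun t ht => hF.hasDerivAt_fderiv_line (hray t ht)) hanti hlim

theorem fderiv_fderiv_nonneg (hF : IsNormalBarrier K F ν) (hK : IsRegularCone K)
    (hNC : HasNegativeCurvature K F) (hx : x ∈ interior K) (hh : h ∈ K) (hy : y ∈ K) :
    0 ≤ fderiv ℝ (fderiv ℝ F) x y h := by
  rw [← hK.closure_interior] at hh
  exact closure_minimal (fun h' hh' => hF.fderiv_fderiv_nonneg_of_mem_interior hK hNC hx hh' hy)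
    (isClosed_le continuous_const (fderiv ℝ (fderiv ℝ F) x y).continuous) hh

theorem fderiv_apply_le_fderiv_add_apply (hF : IsNormalBarrier K F ν) (hK : IsRegularCone K)
    (hNC : HasNegativeCurvature K F) (hx : x ∈ interior K) (hh : h ∈ K) (hy : y ∈ K) :
    fderiv ℝ F x y ≤ fderiv ℝ F (x + h) y := by
  have hray : ∀ t ∈ Ici (0 : ℝ), x + t • h ∈ interior K := fun t ht =>
    hK.add_smul_mem_interior hx hh ht
  have hmono : MonotoneOn (fun t : ℝ => fderiv ℝ F (x + t • h) y) (Ici 0) :=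
    monotoneOn_of_hasDerivWithinAt_nonneg (convex_Ici 0)
      (fun t ht => (hF.hasDerivAt_fderiv_line (hray t ht)).continuousAt.continuousWithinAt)
      (fun t ht => (hF.hasDerivAt_fderiv_line (hray t (interior_subset ht))).hasDerivWithinAt)
      (fun t ht => hF.fderiv_fderiv_nonneg hK hNC (hray t (interior_subset ht)) hh hy)
  simpa using hmono self_mem_Ici (mem_Ici.2 zero_le_one) zero_le_one

end IsNormalBarrier

/-- Theorem `th-Mon`: for a normal barrier with negative curvature,
`∇²F(x) h ∈ K*` and `∇F(x+h) − ∇F(x) ∈ K*` whenever `x ∈ int K` and `h ∈ K`. -/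
theorem negative_curvature_monotone {E : Type*} [NormedAddCommGroup E]
    [InnerProductSpace ℝ E] [FiniteDimensional ℝ E]
    (K : Set E) (hK : IsRegularCone K) (F : E → ℝ) (ν : ℝ)
    (hF : IsNormalBarrier K F ν)
    (hNC : ∀ x ∈ interior K, ∀ h ∈ K, ∀ u : E, iteratedFDeriv ℝ 3 F x ![h, u, u] ≤ 0) :
    ∀ x ∈ interior K, ∀ h ∈ K,
      hess F x h ∈ dualConeSet K ∧ gradient F (x + h) - gradient F x ∈ dualConeSet K := by
  intro x hx h hh
  refine ⟨fun y hy => ?_, fun y hy => ?_⟩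
  · rw [inner_hess_apply_s18, hF.fderiv_fderiv_comm hx]
    exact hF.fderiv_fderiv_nonneg hK hNC hx hh hy
  · rw [inner_sub_left, inner_gradient_left, inner_gradient_left, sub_nonneg]
    exact hF.fderiv_apply_le_fderiv_add_apply hK hNC hx hh hy
end
end

section
/- Let K ⊆ E be a regular cone and F a ν-normal barrier for K with negative curvature. Let x ∈ int K and h ∈ E with x + h ∈ int K, and define σ_x(h) = min{ρ ≥ 0 : ρ·x − h ∈ K}. Then for every α ∈ [0,1): (1/(1 + α·σ_x(h))²)·∇²F(x) ⪯ ∇²F(x + αh) ⪯ (1/(1 − α)²)·∇²F(x) in the Loewner order. -/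
open Set Filter Topology RealInnerProductSpace

noncomputable section

/-!
Fix `u` and let `q y = D²F(y)[u, u]`. Logarithmic homogeneity makes `q` homogeneous of degree
`-2`, so Euler's identity gives `Dq(y)[y] = -2 q(y)`, while negative curvature says
`Dq(y)[k] ≤ 0` for `k ∈ K`. Along `y_t = x + t h`, writing `h - c x = (1 + c t) h - c y_t` turns
`Dq(y_t)[h - c x]` into `(1 + c t) φ' t + 2 c φ t` for `φ t = q y_t`. Taking `c = -1`
(`h + x ∈ K`) and `c = σ` (`σ x - h ∈ K`) shows that `(1 - t)² φ t` is nonincreasing and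
`(1 + σ t)² φ t` is nondecreasing on `[0, α]`; comparing `t = 0` with `t = α` gives both bounds.
-/
section Calculus

variable {𝕜 : Type*} [NontriviallyNormedField 𝕜] {E G : Type*}
  [NormedAddCommGroup E] [NormedSpace 𝕜 E] [NormedAddCommGroup G] [NormedSpace 𝕜 G]

theorem fderiv_smul_eq_of_comp_smul_eventuallyEq {f g : E → G} {τ : 𝕜} {z : E} (hτ : τ ≠ 0)
    (hfg : (fun w => f (τ • w)) =ᶠ[𝓝 z] g) :
    fderiv 𝕜 f (τ • z) = τ⁻¹ • fderiv 𝕜 g z := by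
  rw [← hfg.fderiv_eq, fderiv_comp_smul, inv_smul_smul₀ hτ]

theorem fderiv_iteratedFDeriv_apply {f : E → G} {n : ℕ} {y : E}
    (hf : DifferentiableAt 𝕜 (iteratedFDeriv 𝕜 n f) y) (m : Fin n → E) (v : E) :
    fderiv 𝕜 (fun z => iteratedFDeriv 𝕜 n f z m) y v =
      iteratedFDeriv 𝕜 (n + 1) f y (Fin.cons v m) := by
  rw [fderiv_continuousMultilinear_apply_const_apply hf, iteratedFDeriv_succ_apply_left,
    Fin.cons_zero, Fin.tail_cons]

end Calculus

theorem fderiv_apply_self_of_zpow_homogeneous {E : Type*} [NormedAddCommGroup E]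
    [NormedSpace ℝ E] {g : E → ℝ} {y : E} {k : ℤ} (hg : DifferentiableAt ℝ g y)
    (hhom : ∀ᶠ τ in 𝓝 (1 : ℝ), g (τ • y) = τ ^ k * g y) :
    fderiv ℝ g y y = k * g y := by
  have hline : HasDerivAt (fun τ : ℝ => g (τ • y)) (fderiv ℝ g y y) 1 := by
    have hray : HasDerivAt (fun τ : ℝ => τ • y) y 1 := by
      simpa using (hasDerivAt_id (1 : ℝ)).smul_const y
    exact hg.hasFDerivAt.comp_hasDerivAt_of_eq 1 hray (one_smul ℝ y).symm
  have hpow : HasDerivAt (fun τ : ℝ => τ ^ k * g y) (k * g y) 1 := by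
    simpa using (hasDerivAt_zpow k (1 : ℝ) (Or.inl one_ne_zero)).mul_const (g y)
  exact (hline.congr_of_eventuallyEq (hhom.mono fun _ h => h.symm)).unique hpow

theorem antitoneOn_sq_mul_of_hasDerivAt {φ φ' : ℝ → ℝ} {a b c : ℝ}
    (hφ : ∀ t ∈ Icc a b, HasDerivAt φ (φ' t) t) (hpos : ∀ t ∈ Icc a b, 0 ≤ 1 + c * t)
    (hle : ∀ t ∈ Icc a b, (1 + c * t) * φ' t + 2 * c * φ t ≤ 0) :
    AntitoneOn (fun t => (1 + c * t) ^ 2 * φ t) (Icc a b) := by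
  have hderiv : ∀ t ∈ Icc a b, HasDerivAt (fun t => (1 + c * t) ^ 2 * φ t)
      ((1 + c * t) * ((1 + c * t) * φ' t + 2 * c * φ t)) t := by
    intro t ht
    refine ((((hasDerivAt_id' t).const_mul c).const_add 1).fun_pow 2).fun_mul (hφ t ht)
      |>.congr_deriv ?_
    norm_num
    ring
  refine antitoneOn_of_hasDerivWithinAt_nonpos (convex_Icc a b)
    (fun t ht => (hderiv t ht).continuousAt.continuousWithinAt)
    (fun t ht => (hderiv t (interior_subset ht)).hasDerivWithinAt)
    (fun t ht => mul_nonpos_of_nonneg_of_nonpos (hpos t (interior_subset ht))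
      (hle t (interior_subset ht)))

theorem inner_hess_apply_s19 {E : Type*} [NormedAddCommGroup E] [InnerProductSpace ℝ E]
    [CompleteSpace E] (f : E → ℝ) (y u v : E) :
    ⟪hess f y u, v⟫ = iteratedFDeriv ℝ 2 f y ![u, v] := by
  have hgrad : gradient f = (InnerProductSpace.toDual ℝ E).symm ∘ fderiv ℝ f := rfl
  rw [iteratedFDeriv_two_apply, hess, hgrad, LinearIsometryEquiv.comp_fderiv]
  exact InnerProductSpace.toDual_symm_apply

namespace IsNormalBarrier

variable {E : Type*} [NormedAddCommGroup E] [InnerProductSpace ℝ E] [CompleteSpace E]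
  {K : Set E} {F : E → ℝ} {ν : ℝ}

theorem differentiableAt_iteratedFDeriv_two (hF : IsNormalBarrier K F ν) {y : E}
    (hy : y ∈ interior K) : DifferentiableAt ℝ (iteratedFDeriv ℝ 2 F) y :=
  (hF.smooth.contDiffAt (isOpen_interior.mem_nhds hy)).differentiableAt_iteratedFDeriv
    (by norm_num)

theorem fderiv_smul (hF : IsNormalBarrier K F ν) {τ : ℝ} (hτ : 0 < τ) {z : E}
    (hz : z ∈ interior K) : fderiv ℝ F (τ • z) = τ⁻¹ • fderiv ℝ F z := by
  rw [fderiv_smul_eq_of_comp_smul_eventuallyEq hτ.ne' (g := fun w => F w - ν * Real.log τ),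
    fderiv_sub_const]
  filter_upwards [isOpen_interior.mem_nhds hz] with w hw using hF.logHom w hw τ hτ

theorem fderiv_fderiv_smul (hF : IsNormalBarrier K F ν) {τ : ℝ} (hτ : 0 < τ) {z : E}
    (hz : z ∈ interior K) :
    fderiv ℝ (fderiv ℝ F) (τ • z) = τ⁻¹ • τ⁻¹ • fderiv ℝ (fderiv ℝ F) z := by
  rw [fderiv_smul_eq_of_comp_smul_eventuallyEq hτ.ne' (g := τ⁻¹ • fderiv ℝ F),
    fderiv_const_smul_field (R := ℝ) (f := fderiv ℝ F) τ⁻¹]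
  · rfl
  filter_upwards [isOpen_interior.mem_nhds hz] with w hw using hF.fderiv_smul hτ hw

theorem iteratedFDeriv_two_smul (hF : IsNormalBarrier K F ν) {τ : ℝ} (hτ : 0 < τ) {z : E}
    (hz : z ∈ interior K) (m : Fin 2 → E) :
    iteratedFDeriv ℝ 2 F (τ • z) m = τ ^ (-2 : ℤ) * iteratedFDeriv ℝ 2 F z m := by
  simp only [iteratedFDeriv_two_apply, hF.fderiv_fderiv_smul hτ hz,
    smul_apply, smul_eq_mul, zpow_neg, zpow_ofNat]
  ring

theorem fderiv_iteratedFDeriv_two_apply_self (hF : IsNormalBarrier K F ν) {y : E}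
    (hy : y ∈ interior K) (m : Fin 2 → E) :
    fderiv ℝ (fun z => iteratedFDeriv ℝ 2 F z m) y y = -2 * iteratedFDeriv ℝ 2 F y m := by
  have hhom : ∀ᶠ τ in 𝓝 (1 : ℝ), iteratedFDeriv ℝ 2 F (τ • y) m
      = τ ^ (-2 : ℤ) * iteratedFDeriv ℝ 2 F y m := by
    filter_upwards [eventually_gt_nhds one_pos] with τ hτ using hF.iteratedFDeriv_two_smul hτ hy m
  simpa using fderiv_apply_self_of_zpow_homogeneous
    ((hF.differentiableAt_iteratedFDeriv_two hy).continuousMultilinear_apply_const m) hhom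

theorem hasDerivAt_iteratedFDeriv_two_apply_add_smul (hF : IsNormalBarrier K F ν) {x h : E}
    {t : ℝ} (hy : x + t • h ∈ interior K) (m : Fin 2 → E) :
    HasDerivAt (fun s => iteratedFDeriv ℝ 2 F (x + s • h) m)
      (fderiv ℝ (fun z => iteratedFDeriv ℝ 2 F z m) (x + t • h) h) t := by
  have hline : HasDerivAt (fun s : ℝ => x + s • h) h t := by
    simpa using ((hasDerivAt_id t).smul_const h).const_add x
  exact ((hF.differentiableAt_iteratedFDeriv_two hy).continuousMultilinear_apply_const
    m).hasFDerivAt.comp_hasDerivAt t hline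

theorem fderiv_iteratedFDeriv_two_apply_sub_smul (hF : IsNormalBarrier K F ν) {x h : E} {t : ℝ}
    (hy : x + t • h ∈ interior K) (m : Fin 2 → E) (c : ℝ) :
    fderiv ℝ (fun z => iteratedFDeriv ℝ 2 F z m) (x + t • h) (h - c • x) =
      (1 + c * t) * fderiv ℝ (fun z => iteratedFDeriv ℝ 2 F z m) (x + t • h) h
        + 2 * c * iteratedFDeriv ℝ 2 F (x + t • h) m := by
  have hsplit : h - c • x = (1 + c * t) • h - c • (x + t • h) := by module
  rw [hsplit, map_sub, map_smul, map_smul, hF.fderiv_iteratedFDeriv_two_apply_self hy,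
    smul_eq_mul, smul_eq_mul]
  ring

end IsNormalBarrier

/-- Theorem `th-NCHess`: Hessian bounds along a segment for a normal
barrier with negative curvature, with `σ_x(h) = min{ρ ≥ 0 : ρ x − h ∈ K}`. -/
theorem negative_curvature_hessian_bounds {E : Type*} [NormedAddCommGroup E]
    [InnerProductSpace ℝ E] [FiniteDimensional ℝ E]
    (K : Set E) (hK : IsRegularCone K) (F : E → ℝ) (ν : ℝ)
    (hF : IsNormalBarrier K F ν)
    (hNC : ∀ x ∈ interior K, ∀ h ∈ K, ∀ u : E, iteratedFDeriv ℝ 3 F x ![h, u, u] ≤ 0)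
    (x : E) (hx : x ∈ interior K) (h : E) (hxh : x + h ∈ interior K)
    (σ : ℝ) (hσ : IsLeast {ρ : ℝ | 0 ≤ ρ ∧ ρ • x - h ∈ K} σ) :
    ∀ α : ℝ, 0 ≤ α → α < 1 → ∀ u : E,
      1 / (1 + α * σ) ^ 2 * ⟪hess F x u, u⟫ ≤ ⟪hess F (x + α • h) u, u⟫ ∧
      ⟪hess F (x + α • h) u, u⟫ ≤ 1 / (1 - α) ^ 2 * ⟪hess F x u, u⟫ := by
  intro α hα0 hα1 u
  rw [inner_hess_apply_s19, inner_hess_apply_s19]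
  have hseg : ∀ t ∈ Icc 0 α, x + t • h ∈ interior K := fun t ht =>
    hK.convex.interior.add_smul_mem hx hxh ⟨ht.1, ht.2.trans hα1.le⟩
  have hφ := fun t ht => hF.hasDerivAt_iteratedFDeriv_two_apply_add_smul (hseg t ht) ![u, u]
  have hcurv : ∀ t ∈ Icc 0 α, ∀ k ∈ K,
      fderiv ℝ (fun z => iteratedFDeriv ℝ 2 F z ![u, u]) (x + t • h) k ≤ 0 := fun t ht k hk =>
    (fderiv_iteratedFDeriv_apply (hF.differentiableAt_iteratedFDeriv_two (hseg t ht)) _ k).trans_le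
      (hNC _ (hseg t ht) k hk u)
  have hupper := antitoneOn_sq_mul_of_hasDerivAt (c := -1) hφ
    (fun t ht => by linarith [ht.2]) fun t ht => by
      rw [← hF.fderiv_iteratedFDeriv_two_apply_sub_smul (hseg t ht),
        show h - (-1 : ℝ) • x = x + h by module]
      exact hcurv t ht _ (interior_subset hxh)
  have hlower := antitoneOn_sq_mul_of_hasDerivAt (c := σ) (fun t ht => (hφ t ht).fun_neg)
    (fun t ht => add_nonneg zero_le_one (mul_nonneg hσ.1.1 ht.1)) fun t ht => by
      have := hF.fderiv_iteratedFDeriv_two_apply_sub_smul (hseg t ht) ![u, u] σ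
      rw [← neg_sub, map_neg] at this
      linarith [hcurv t ht _ hσ.1.2]
  have h1 := hupper ⟨le_rfl, hα0⟩ ⟨hα0, le_rfl⟩ hα0
  have h2 := hlower ⟨le_rfl, hα0⟩ ⟨hα0, le_rfl⟩ hα0
  simp only [mul_zero, add_zero, zero_smul, one_pow, one_mul, neg_one_mul, mul_neg,
    neg_le_neg_iff] at h1 h2
  have hσα : 0 < 1 + α * σ := add_pos_of_pos_of_nonneg one_pos (mul_nonneg hα0 hσ.1.1)
  rw [one_div_mul_eq_div, one_div_mul_eq_div, div_le_iff₀ (pow_pos hσα 2),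
    le_div_iff₀ (pow_pos (sub_pos.2 hα1) 2)]
  constructor
  · linear_combination h2
  · linear_combination h1
end
end
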